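/- Abel's binomial identity: for all real numbers $x, y$ and every nonnegative integer $n$, $(x+y)^n = x^n + \sum_{j=1}^n \binom{n}{j}(x-j)^{n-j}\, y\, (y+j)^{j-1}$. -/

import Mathlib

open Finset

lemma fwdDiff_pow_eq_zero : ∀ n m : ℕ, m < n → ∀ y : ℝ,
    (fwdDiff (1:ℝ))^[n] (fun t => t ^ m) y = 0 := by
  intro n
  induction n with
  | zero => intro m hm; omega
  | succ n IH =>
    intro m hm y
    rw [Function.iterate_succ_apply]
    have hΔ : fwdDiff (1:ℝ) (fun t => t ^ m)
        = ∑ k ∈ range m, (fun t : ℝ => (m.choose k : ℝ) * t ^ k) := by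
      funext t
      simp only [fwdDiff, Finset.sum_apply]
      rw [add_pow, Finset.sum_range_succ]
      simp [mul_comm]
    rw [hΔ, fwdDiff_iter_finset_sum, Finset.sum_apply]
    apply Finset.sum_eq_zero
    intro k hk
    rw [Finset.mem_range] at hk
    have : (fun t : ℝ => (m.choose k : ℝ) * t ^ k) = (m.choose k : ℝ) • (fun t : ℝ => t ^ k) := by
      funext t; simp
    rw [this, fwdDiff_iter_const_smul, Pi.smul_apply, IH k (by omega) y, smul_zero]

lemma alt_sum_pow (n : ℕ) (y : ℝ) :
    ∑ k ∈ range (n + 2), (-1:ℝ) ^ (n + 1 - k) * ((n+1).choose k : ℝ) * (y + k) ^ n = 0 := by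
  have h := fwdDiff_iter_eq_sum_shift (1:ℝ) (fun t => t ^ n) (n+1) y
  rw [fwdDiff_pow_eq_zero (n+1) n n.lt_succ_self y] at h
  have h0 : ∑ k ∈ range (n + 2),
      (((-1:ℤ) ^ (n + 1 - k) * ((n+1).choose k : ℤ)) • ((y + k • (1:ℝ)) ^ n)) = 0 := h.symm
  rw [← h0]
  apply Finset.sum_congr rfl
  intro k _
  simp only [nsmul_eq_mul, mul_one, zsmul_eq_mul]
  push_cast
  ring

/-- Abel's binomial identity: for all real `x, y` and every natural number `n`,
`(x+y)^n = x^n + ∑_{j=1}^n C(n,j) (x-j)^(n-j) y (y+j)^(j-1)`. -/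
theorem abel_binomial (x y : ℝ) (n : ℕ) :
    (x + y) ^ n =
      x ^ n + ∑ j ∈ Finset.Icc 1 n,
        (n.choose j : ℝ) * (x - (j : ℝ)) ^ (n - j) * y * (y + (j : ℝ)) ^ (j - 1) := by
  induction n generalizing x with
  | zero => simp
  | succ n IH =>
    set F : ℝ → ℝ := fun x => (x + y) ^ (n+1) - x ^ (n+1) -
      ∑ j ∈ Finset.Icc 1 (n+1),
        ((n+1).choose j : ℝ) * (x - (j : ℝ)) ^ (n + 1 - j) * y * (y + (j : ℝ)) ^ (j - 1) with hF
    have hder : ∀ z : ℝ, HasDerivAt F 0 z := by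
      intro z
      have h1 : HasDerivAt (fun x : ℝ => (x + y) ^ (n+1))
          (((n+1 : ℕ) : ℝ) * (z + y) ^ n) z := by
        have := (((hasDerivAt_id z).add_const y).fun_pow (n+1))
        simpa using this
      have h2 : HasDerivAt (fun x : ℝ => x ^ (n+1)) (((n+1 : ℕ) : ℝ) * z ^ n) z := by
        simpa using hasDerivAt_pow (n+1) z
      have h3 : HasDerivAt (fun x : ℝ => ∑ j ∈ Finset.Icc 1 (n+1),
          ((n+1).choose j : ℝ) * (x - (j : ℝ)) ^ (n + 1 - j) * y * (y + (j : ℝ)) ^ (j - 1))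
          (∑ j ∈ Finset.Icc 1 (n+1),
            ((n+1).choose j : ℝ) * (((n + 1 - j : ℕ) : ℝ) * (z - (j : ℝ)) ^ (n + 1 - j - 1)) * y
              * (y + (j : ℝ)) ^ (j - 1)) z := by
        apply HasDerivAt.fun_sum
        intro j _
        have hb : HasDerivAt (fun x : ℝ => (x - (j:ℝ)) ^ (n + 1 - j))
            (((n + 1 - j : ℕ) : ℝ) * (z - (j : ℝ)) ^ (n + 1 - j - 1)) z := by
          have := ((hasDerivAt_id z).sub_const (j:ℝ)).fun_pow (n + 1 - j)
          simpa using this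
        have := ((hb.const_mul (((n+1).choose j : ℝ))).mul_const y).mul_const
          ((y + (j : ℝ)) ^ (j - 1))
        exact this
      have hsum : ∑ j ∈ Finset.Icc 1 (n+1),
            ((n+1).choose j : ℝ) * (((n + 1 - j : ℕ) : ℝ) * (z - (j : ℝ)) ^ (n + 1 - j - 1)) * y
              * (y + (j : ℝ)) ^ (j - 1)
          = ((n+1 : ℕ) : ℝ) * ∑ j ∈ Finset.Icc 1 n,
              (n.choose j : ℝ) * (z - (j : ℝ)) ^ (n - j) * y * (y + (j : ℝ)) ^ (j - 1) := by
        rw [Finset.sum_Icc_succ_top (by omega : 1 ≤ n + 1)]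
        have htop : ((n+1).choose (n+1) : ℝ)
            * (((n + 1 - (n+1) : ℕ) : ℝ) * (z - ((n+1 : ℕ) : ℝ)) ^ (n + 1 - (n+1) - 1)) * y
            * (y + ((n+1 : ℕ) : ℝ)) ^ ((n+1) - 1) = 0 := by
          simp
        rw [htop, add_zero, Finset.mul_sum]
        apply Finset.sum_congr rfl
        intro j hj
        rw [Finset.mem_Icc] at hj
        have hcast : ((n+1).choose j : ℝ) * ((n + 1 - j : ℕ) : ℝ)
            = ((n+1 : ℕ) : ℝ) * (n.choose j : ℝ) := by
          rw [← Nat.cast_mul, ← Nat.cast_mul]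
          congr 1
          rw [← Nat.choose_mul_succ_eq n j]
          ring
        have he : n + 1 - j - 1 = n - j := by omega
        rw [he]
        calc ((n+1).choose j : ℝ) * (((n + 1 - j : ℕ):ℝ) * (z - (j : ℝ)) ^ (n - j)) * y
            * (y + (j : ℝ)) ^ (j - 1)
            = (((n+1).choose j : ℝ) * ((n + 1 - j : ℕ):ℝ)) * ((z - (j : ℝ)) ^ (n - j) * y
            * (y + (j : ℝ)) ^ (j - 1)) := by ring
          _ = _ := by rw [hcast]; ring
      have key : ((n+1 : ℕ) : ℝ) * (z + y) ^ n - ((n+1 : ℕ) : ℝ) * z ^ n -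
          ∑ j ∈ Finset.Icc 1 (n+1),
            ((n+1).choose j : ℝ) * (((n + 1 - j : ℕ) : ℝ) * (z - (j : ℝ)) ^ (n + 1 - j - 1)) * y
              * (y + (j : ℝ)) ^ (j - 1) = 0 := by
        rw [hsum, IH z]
        ring
      have := (h1.sub h2).sub h3
      rw [key] at this
      exact this
    have hdiff : Differentiable ℝ F := fun z => (hder z).differentiableAt
    have hzero : ∀ z, deriv F z = 0 := fun z => (hder z).deriv
    have hconst := is_const_of_deriv_eq_zero hdiff hzero x (-y)
    have hFy : F (-y) = 0 := by
      show (-y + y) ^ (n+1) - (-y) ^ (n+1) -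
        ∑ j ∈ Finset.Icc 1 (n+1),
          ((n+1).choose j : ℝ) * (-y - (j : ℝ)) ^ (n + 1 - j) * y * (y + (j : ℝ)) ^ (j - 1) = 0
      have hterm : ∀ j ∈ Finset.Icc 1 (n+1),
          ((n+1).choose j : ℝ) * (-y - (j : ℝ)) ^ (n + 1 - j) * y * (y + (j : ℝ)) ^ (j - 1)
          = ((-1:ℝ) ^ (n + 1 - j) * ((n+1).choose j : ℝ) * (y + (j:ℝ)) ^ n) * y := by
        intro j hj
        rw [Finset.mem_Icc] at hj
        have h1 : (-y - (j : ℝ)) = (-1) * (y + j) := by ring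
        rw [h1, mul_pow]
        have h2 : (y + (j:ℝ)) ^ (n + 1 - j) * (y + (j:ℝ)) ^ (j - 1) = (y + (j:ℝ)) ^ n := by
          rw [← pow_add]; congr 1; omega
        calc ((n+1).choose j : ℝ) * ((-1:ℝ) ^ (n+1-j) * (y + (j:ℝ)) ^ (n + 1 - j)) * y *
            (y + (j : ℝ)) ^ (j - 1)
            = (-1:ℝ) ^ (n+1-j) * ((n+1).choose j : ℝ) *
              ((y + (j:ℝ)) ^ (n + 1 - j) * (y + (j:ℝ)) ^ (j - 1)) * y := by ring
          _ = _ := by rw [h2]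
      rw [Finset.sum_congr rfl hterm, ← Finset.sum_mul]
      have halt := alt_sum_pow n y
      have hsplit : ∑ k ∈ range (n + 2), (-1:ℝ) ^ (n + 1 - k) * ((n+1).choose k : ℝ) * (y + k) ^ n
          = (-1:ℝ)^(n+1) * y ^ n +
            ∑ j ∈ Finset.Icc 1 (n+1),
              (-1:ℝ) ^ (n + 1 - j) * ((n+1).choose j : ℝ) * (y + (j:ℝ)) ^ n := by
        rw [Finset.sum_range_succ', ← Finset.Ico_add_one_right_eq_Icc,
          Finset.sum_Ico_eq_sum_range]
        rw [add_comm]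
        congr 1
        · simp
        · apply Finset.sum_congr rfl
          intro i _
          have h11 : 1 + i = i + 1 := by omega
          rw [h11]
      have hIcc : ∑ j ∈ Finset.Icc 1 (n+1),
          (-1:ℝ) ^ (n + 1 - j) * ((n+1).choose j : ℝ) * (y + (j:ℝ)) ^ n
          = -((-1:ℝ)^(n+1) * y ^ n) := by
        have h0 : (-1:ℝ)^(n+1) * y ^ n + ∑ j ∈ Finset.Icc 1 (n+1),
            (-1:ℝ) ^ (n + 1 - j) * ((n+1).choose j : ℝ) * (y + (j:ℝ)) ^ n = 0 := by
          rw [← hsplit]; exact halt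
        linarith
      rw [hIcc]
      have hneg : (-y) ^ (n+1) = (-1:ℝ)^(n+1) * y^(n+1) := by
        rw [neg_pow]
      rw [hneg]
      have : (-y + y : ℝ) = 0 := by ring
      rw [this, zero_pow (by omega : n + 1 ≠ 0)]
      ring
    have hx0 : F x = 0 := hconst.trans hFy
    have : (x + y) ^ (n+1) - x ^ (n+1) -
        ∑ j ∈ Finset.Icc 1 (n+1),
          ((n+1).choose j : ℝ) * (x - (j : ℝ)) ^ (n + 1 - j) * y * (y + (j : ℝ)) ^ (j - 1) = 0 :=
      hx0
    linarith [this]
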